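/- arXiv:1501.02831 — 7 statements merged into one kernel-verified Lean document; each statement's English description precedes it below -/
import Mathlib

section
/- Let H be a complex Hilbert space and let S and N be bounded linear operators on H, with T = S + N. Assume: (A) for every λ ∈ ℂ not in the spectrum of S, the operator (S − λI)⁻¹N is quasinilpotent; and (B) for every λ ∈ ℂ not in the spectrum of T, the operator (T − λI)⁻¹N is quasinilpotent. Then the spectrum of T equals the spectrum of S. -/
/-! If `a - z` is invertible, then `a - b - z = (a - z) * (1 - (a - z)⁻¹ * b)`, so the spectrum
of `a` changes under the perturbation `b` only where `1` lies in the spectrum of `(a - z)⁻¹ * b`;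
a quasinilpotent `(a - z)⁻¹ * b` never has `1` in its spectrum. Applying this to `S = T - N` and
`T = S - (-N)` gives both inclusions. -/

open Polynomial

/-- A bounded operator is quasinilpotent if its spectrum is contained in `{0}`. -/
def IsQuasinilpotent {H : Type*} [NormedAddCommGroup H] [InnerProductSpace ℂ H]
    [CompleteSpace H] (A : H →L[ℂ] H) : Prop :=
  spectrum ℂ A ⊆ {0}

namespace spectrum

theorem notMem_sub_of_one_notMem {R A : Type*} [CommRing R] [Ring A] [Algebra R A]
    {a b : A} {z : R} (hz : z ∉ spectrum R a)
    (hb : 1 ∉ spectrum R (Ring.inverse (a - algebraMap R A z) * b)) :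
    z ∉ spectrum R (a - b) := by
  rw [notMem_iff] at hz hb ⊢
  have hu : IsUnit (a - algebraMap R A z) := by simpa using hz.neg
  rw [map_one] at hb
  have factor : algebraMap R A z - (a - b) =
      -((a - algebraMap R A z) * (1 - Ring.inverse (a - algebraMap R A z) * b)) := by
    rw [mul_sub, mul_one, ← mul_assoc, Ring.mul_inverse_cancel _ hu, one_mul]
    abel
  rw [factor]
  exact (hu.mul hb).neg

end spectrum

section Quasinilpotent

variable {H : Type*} [NormedAddCommGroup H] [InnerProductSpace ℂ H] [CompleteSpace H]

theorem IsQuasinilpotent.one_notMem_spectrum {Q : H →L[ℂ] H} (hQ : IsQuasinilpotent Q) :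
    1 ∉ spectrum ℂ Q :=
  fun h => one_ne_zero (hQ h)

theorem IsQuasinilpotent.neg {Q : H →L[ℂ] H} (hQ : IsQuasinilpotent Q) :
    IsQuasinilpotent (-Q) := by
  intro w hw
  rw [← spectrum.neg_eq, Set.mem_neg] at hw
  simpa using hQ hw

end Quasinilpotent

theorem stmt_0 {H : Type*} [NormedAddCommGroup H] [InnerProductSpace ℂ H] [CompleteSpace H]
    (S N T : H →L[ℂ] H) (hT : T = S + N)
    (hA : ∀ z : ℂ, z ∉ spectrum ℂ S →
      IsQuasinilpotent (Ring.inverse (S - algebraMap ℂ (H →L[ℂ] H) z) * N))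
    (hB : ∀ z : ℂ, z ∉ spectrum ℂ T →
      IsQuasinilpotent (Ring.inverse (T - algebraMap ℂ (H →L[ℂ] H) z) * N)) :
    spectrum ℂ T = spectrum ℂ S := by
  ext z
  rw [← not_iff_not]
  constructor
  · intro hz
    have hS : S = T - N := by rw [hT, add_sub_cancel_right]
    rw [hS]
    exact spectrum.notMem_sub_of_one_notMem hz (hB z hz).one_notMem_spectrum
  · intro hz
    have hT' : T = S - -N := by rw [hT, sub_neg_eq_add]
    rw [hT']
    refine spectrum.notMem_sub_of_one_notMem hz ?_
    rw [mul_neg]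
    exact (hA z hz).neg.one_notMem_spectrum
end

section
/- Let H be a complex Hilbert space and let S and N be bounded linear operators on H with N compact, and set T = S + N. Assume: (A) for every λ ∈ ℂ not in the spectrum of S, the operator (S − λI)⁻¹N is quasinilpotent; and (B) for every λ ∈ ℂ not in the spectrum of T, the operator (T − λI)⁻¹N is quasinilpotent. Then for every polynomial p with complex coefficients, the operator p(T) − p(S) is compact, and σ(p(T)) = σ(p(S)) = p(σ(S)) = p(σ(T)). -/
/-!
Since `T - z = (S - z)(1 + (S - z)⁻¹N)` and `S - z = (T - z)(1 - (T - z)⁻¹N)`, the two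
quasinilpotence hypotheses make `1 ± (⋯)⁻¹N` invertible, so the resolvent sets, hence the
spectra, of `S` and `T` coincide. The spectral mapping theorem then gives all the equalities of
spectra, while `p(T) - p(S)` is compact because compact operators form a two-sided ideal and
`T ^ (n + 1) - S ^ (n + 1) = T (T ^ n - S ^ n) + N S ^ n`.
-/

open Polynomial

section Spectrum

variable {R A : Type*} [CommRing R] [Ring A] [Algebra R A]

lemma isUnit_one_sub_of_spectrum_subset_zero [Nontrivial R] {c : A}
    (h : spectrum R c ⊆ {0}) : IsUnit (1 - c) := by
  have h1 : (1 : R) ∉ spectrum R c := fun h1 => one_ne_zero (h h1)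
  simpa using spectrum.notMem_iff.mp h1

lemma isUnit_one_add_of_spectrum_subset_zero [Nontrivial R] {c : A}
    (h : spectrum R c ⊆ {0}) : IsUnit (1 + c) := by
  have h1 : (-1 : R) ∉ spectrum R c := fun h1 => neg_ne_zero.mpr one_ne_zero (h h1)
  have := (spectrum.notMem_iff.mp h1).neg
  rwa [map_neg, map_one, neg_sub, sub_neg_eq_add, add_comm] at this

lemma isUnit_add_of_isUnit_one_add_inverse_mul {a b : A} (ha : IsUnit a)
    (h : IsUnit (1 + Ring.inverse a * b)) : IsUnit (a + b) := by
  have factor : a * (1 + Ring.inverse a * b) = a + b := by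
    rw [mul_add, mul_one, ← mul_assoc, Ring.mul_inverse_cancel a ha, one_mul]
  exact factor ▸ ha.mul h

lemma spectrum_add_subset {a b : A}
    (h : ∀ z ∉ spectrum R a, IsUnit (1 + Ring.inverse (a - algebraMap R A z) * b)) :
    spectrum R (a + b) ⊆ spectrum R a := by
  intro z hz
  by_contra hza
  have ha : IsUnit (a - algebraMap R A z) := IsUnit.sub_iff.mp (spectrum.notMem_iff.mp hza)
  have hab := isUnit_add_of_isUnit_one_add_inverse_mul ha (h z hza)
  rw [sub_add_eq_add_sub] at hab
  exact spectrum.notMem_iff.mpr (IsUnit.sub_iff.mp hab) hz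

end Spectrum

lemma spectrum_aeval_eq_image {A : Type*} [NormedRing A] [NormedAlgebra ℂ A] [CompleteSpace A]
    (a : A) (p : ℂ[X]) : spectrum ℂ (aeval a p) = (fun z => p.eval z) '' spectrum ℂ a := by
  rcases subsingleton_or_nontrivial A with _ | _
  · simp [spectrum.of_subsingleton]
  · exact spectrum.map_polynomial_aeval a p

lemma IsCompactOperator.pow_sub_pow {R M : Type*} [Ring R] [TopologicalSpace M]
    [AddCommGroup M] [IsTopologicalAddGroup M] [Module R M] {S T : M →L[R] M}
    (h : IsCompactOperator ⇑(T - S)) (n : ℕ) : IsCompactOperator ⇑(T ^ n - S ^ n) := by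
  induction n with
  | zero => simpa using isCompactOperator_zero
  | succ n ih =>
    have split : T ^ (n + 1) - S ^ (n + 1) = T * (T ^ n - S ^ n) + (T - S) * S ^ n := by
      rw [pow_succ' T, pow_succ' S]
      noncomm_ring
    rw [split]
    exact (ih.clm_comp T).add (h.comp_clm (S ^ n))

lemma IsCompactOperator.aeval_sub_aeval {R M : Type*} [CommRing R] [TopologicalSpace M]
    [AddCommGroup M] [IsTopologicalAddGroup M] [Module R M] [ContinuousConstSMul R M]
    {S T : M →L[R] M} (h : IsCompactOperator ⇑(T - S)) (p : R[X]) :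
    IsCompactOperator ⇑(aeval T p - aeval S p) := by
  induction p using Polynomial.induction_on' with
  | add p q hp hq =>
    rw [map_add, map_add, add_sub_add_comm]
    exact hp.add hq
  | monomial n a =>
    rw [aeval_monomial, aeval_monomial, ← mul_sub, ← Algebra.smul_def]
    exact (h.pow_sub_pow n).smul a

theorem stmt_1 {H : Type*} [NormedAddCommGroup H] [InnerProductSpace ℂ H] [CompleteSpace H]
    (S N T : H →L[ℂ] H) (hT : T = S + N) (hN : IsCompactOperator (⇑N))
    (hA : ∀ z : ℂ, z ∉ spectrum ℂ S →
      IsQuasinilpotent (Ring.inverse (S - algebraMap ℂ (H →L[ℂ] H) z) * N))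
    (hB : ∀ z : ℂ, z ∉ spectrum ℂ T →
      IsQuasinilpotent (Ring.inverse (T - algebraMap ℂ (H →L[ℂ] H) z) * N)) :
    ∀ p : ℂ[X],
      IsCompactOperator (⇑(aeval T p - aeval S p)) ∧
      spectrum ℂ (aeval T p) = spectrum ℂ (aeval S p) ∧
      spectrum ℂ (aeval S p) = (fun z => p.eval z) '' spectrum ℂ S ∧
      (fun z => p.eval z) '' spectrum ℂ S = (fun z => p.eval z) '' spectrum ℂ T := by
  have hTS : spectrum ℂ T ⊆ spectrum ℂ S := hT ▸ spectrum_add_subset fun z hz =>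
    isUnit_one_add_of_spectrum_subset_zero (hA z hz)
  have hST : spectrum ℂ S ⊆ spectrum ℂ T := by
    simpa only [hT, add_neg_cancel_right] using spectrum_add_subset (a := T) (b := -N)
      fun z hz => by
        simpa only [mul_neg, ← sub_eq_add_neg] using
          isUnit_one_sub_of_spectrum_subset_zero (hB z hz)
  have hspec : spectrum ℂ S = spectrum ℂ T := hST.antisymm hTS
  have hcomp : IsCompactOperator ⇑(T - S) := by rwa [hT, add_sub_cancel_left]
  intro p
  refine ⟨hcomp.aeval_sub_aeval p, ?_, spectrum_aeval_eq_image S p, by rw [hspec]⟩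
  rw [spectrum_aeval_eq_image, spectrum_aeval_eq_image, hspec]
end

section
/- Let H be a complex Hilbert space and let S and N be bounded linear operators on H with N compact, and set T = S + N. Assume: (A) for every λ ∈ ℂ not in the spectrum of S, the operator (S − λI)⁻¹N is quasinilpotent; and (B) for every λ ∈ ℂ not in the spectrum of T, the operator (T − λI)⁻¹N is quasinilpotent. Let p and q be polynomials with complex coefficients such that q has no zeros on σ(T). Then q(T) and q(S) are invertible bounded operators, and the operator p(T)·q(T)⁻¹ − p(S)·q(S)⁻¹ is compact. -/
/-!
Modulo the ideal of compact operators, `T = S + N` and `S` become equal, hence so do `p(T)` and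
`p(S)`, and, once both are invertible, `q(T)⁻¹` and `q(S)⁻¹`. Invertibility comes from the spectral
mapping theorem and `σ(S) ⊆ σ(T)`: off `σ(T)` one has `S - z = (T - z)(1 - (T - z)⁻¹ N)`, and the
second factor is invertible because `(T - z)⁻¹ N` is quasinilpotent.
-/

open Polynomial

def compactOperatorIdeal (R M : Type*) [Ring R] [TopologicalSpace M] [AddCommGroup M]
    [IsTopologicalAddGroup M] [Module R M] : TwoSidedIdeal (M →L[R] M) :=
  .mk' {f | IsCompactOperator f} isCompactOperator_zero (fun hf hg => hf.add hg)
    (fun hf => hf.neg) (fun {f _} hg => hg.continuous_comp f.continuous) (fun hf => hf.comp_clm _)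

theorem mem_compactOperatorIdeal {R M : Type*} [Ring R] [TopologicalSpace M] [AddCommGroup M]
    [IsTopologicalAddGroup M] [Module R M] {f : M →L[R] M} :
    f ∈ compactOperatorIdeal R M ↔ IsCompactOperator f :=
  TwoSidedIdeal.mem_mk' _ _ _ _ _ _ _

namespace RingCon

variable {A : Type*} [Ring A] (c : RingCon A) {a b : A}

theorem aeval_rel {R : Type*} [CommSemiring R] [Algebra R A] (h : c a b) (p : R[X]) :
    c (aeval a p) (aeval b p) := by
  rw [← c.eq, ← mkₐ_apply R, ← mkₐ_apply R, ← aeval_algHom_apply, ← aeval_algHom_apply]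
  simp only [mkₐ_apply, c.eq.2 h]

theorem ringInverse_rel (h : c a b) (ha : IsUnit a) (hb : IsUnit b) :
    c (Ring.inverse a) (Ring.inverse b) := by
  have h' : c (Ring.inverse a * b * Ring.inverse b) (Ring.inverse a * a * Ring.inverse b) :=
    c.mul (c.mul (c.refl _) (c.symm h)) (c.refl _)
  rwa [mul_assoc, Ring.mul_inverse_cancel _ hb, mul_one, Ring.inverse_mul_cancel _ ha,
    one_mul] at h'

end RingCon

theorem spectrum_subset_spectrum_add {R A : Type*} [CommSemiring R] [Ring A] [Algebra R A]
    (S N : A) (h : ∀ z ∉ spectrum R (S + N),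
      1 ∉ spectrum R (Ring.inverse (S + N - algebraMap R A z) * N)) :
    spectrum R S ⊆ spectrum R (S + N) := by
  intro z hzS
  by_contra hzT
  have hU : IsUnit (S + N - algebraMap R A z) := by
    simpa only [neg_sub] using (spectrum.notMem_iff.1 hzT).neg
  have hV : IsUnit (1 - Ring.inverse (S + N - algebraMap R A z) * N) := by
    simpa only [map_one] using spectrum.notMem_iff.1 (h z hzT)
  have hfactor : S - algebraMap R A z
      = (S + N - algebraMap R A z) * (1 - Ring.inverse (S + N - algebraMap R A z) * N) := by
    rw [mul_sub, mul_one, ← mul_assoc, Ring.mul_inverse_cancel _ hU, one_mul]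
    abel
  have hS := (hfactor ▸ hU.mul hV).neg
  rw [neg_sub] at hS
  exact spectrum.notMem_iff.2 hS hzS

theorem isUnit_aeval_of_eval_ne_zero {A : Type*} [NormedRing A] [NormedAlgebra ℂ A]
    [CompleteSpace A] (a : A) (p : ℂ[X]) (hp : ∀ z ∈ spectrum ℂ a, p.eval z ≠ 0) :
    IsUnit (aeval a p) := by
  nontriviality A
  rw [← spectrum.zero_notMem_iff ℂ, spectrum.map_polynomial_aeval]
  rintro ⟨z, hz, hz0⟩
  exact hp z hz hz0

theorem stmt_2_general {H : Type*} [NormedAddCommGroup H] [InnerProductSpace ℂ H] [CompleteSpace H]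
    (S N T : H →L[ℂ] H) (hT : T = S + N) (hN : IsCompactOperator (⇑N))
    (hB : ∀ z : ℂ, z ∉ spectrum ℂ T →
      IsQuasinilpotent (Ring.inverse (T - algebraMap ℂ (H →L[ℂ] H) z) * N))
    (p q : ℂ[X]) (hq : ∀ z ∈ spectrum ℂ T, q.eval z ≠ 0) :
    IsUnit (aeval T q) ∧ IsUnit (aeval S q) ∧
      IsCompactOperator
        (⇑(aeval T p * Ring.inverse (aeval T q) - aeval S p * Ring.inverse (aeval S q))) := by
  subst hT
  have hσ : spectrum ℂ S ⊆ spectrum ℂ (S + N) :=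
    spectrum_subset_spectrum_add S N fun z hz h1 => one_ne_zero (hB z hz h1)
  have hUT := isUnit_aeval_of_eval_ne_zero _ q hq
  have hUS := isUnit_aeval_of_eval_ne_zero S q fun z hz => hq z (hσ hz)
  refine ⟨hUT, hUS, ?_⟩
  set c := (compactOperatorIdeal ℂ H).ringCon
  have hSN : c (S + N) S := by
    rw [TwoSidedIdeal.rel_iff, add_sub_cancel_left, mem_compactOperatorIdeal]
    exact hN
  rw [← mem_compactOperatorIdeal, ← TwoSidedIdeal.rel_iff]
  exact c.mul (c.aeval_rel hSN p) (c.ringInverse_rel (c.aeval_rel hSN q) hUT hUS)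

theorem stmt_2 {H : Type*} [NormedAddCommGroup H] [InnerProductSpace ℂ H] [CompleteSpace H]
    (S N T : H →L[ℂ] H) (hT : T = S + N) (hN : IsCompactOperator (⇑N))
    (hA : ∀ z : ℂ, z ∉ spectrum ℂ S →
      IsQuasinilpotent (Ring.inverse (S - algebraMap ℂ (H →L[ℂ] H) z) * N))
    (hB : ∀ z : ℂ, z ∉ spectrum ℂ T →
      IsQuasinilpotent (Ring.inverse (T - algebraMap ℂ (H →L[ℂ] H) z) * N))
    (p q : ℂ[X]) (hq : ∀ z ∈ spectrum ℂ T, q.eval z ≠ 0) :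
    IsUnit (aeval T q) ∧ IsUnit (aeval S q) ∧
      IsCompactOperator
        (⇑(aeval T p * Ring.inverse (aeval T q) - aeval S p * Ring.inverse (aeval S q))) :=
  stmt_2_general S N T hT hN hB p q hq
end

section
/- Let H be a complex Hilbert space, S a bounded self-adjoint operator on H, and V a bounded operator on H. For λ with Im λ ≠ 0 set c_n(λ) = (−(Im λ)·(S − λI)⁻¹V)ⁿ. Suppose there exist M > 0 and α > 0 such that ‖c_n(λ)‖ ≤ (M/(ln(n+1))^α)ⁿ for all n ≥ 1 and all λ with Im λ ≠ 0. For y ≠ 0 define r_n(y) = sup_{x ∈ ℝ} ‖c_n(x + iy)‖^{1/n} and let N(y) be the number of indices n ≥ 1 with r_n(y) > |y|/2. Then for every y with 0 < |y|, the set {n ≥ 1 : r_n(y) > |y|/2} is finite and ln N(y) < (2M/|y|)^{1/α} whenever N(y) ≥ 1. -/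
/-!
For `n` in the set, `|y| / 2 < r n y ≤ M / (log (n + 1)) ^ α`, which forces
`log (n + 1) < K := (2M / |y|) ^ (1 / α)`. Hence every such `n` lies in `[1, exp K)`, so there are
fewer than `exp K` of them, and taking logarithms gives `log N < K`.
-/

theorem iSup_rpow_one_div_le {ι : Type*} [Nonempty ι] {f : ι → ℝ} {B : ℝ} {n : ℕ}
    (hn : n ≠ 0) (hf₀ : ∀ i, 0 ≤ f i) (hB : 0 ≤ B) (hf : ∀ i, f i ≤ B ^ n) :
    ⨆ i, f i ^ ((1 : ℝ) / n) ≤ B := by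
  refine ciSup_le fun i => ?_
  rw [one_div, Real.rpow_inv_le_iff_of_pos (hf₀ i) hB (by positivity), Real.rpow_natCast]
  exact hf i

theorem lt_rpow_inv_of_lt_div_rpow {a b L α : ℝ} (ha : 0 < a) (hL : 0 < L) (hα : 0 < α)
    (h : a < b / L ^ α) : L < (b / a) ^ α⁻¹ := by
  have hLα : 0 < L ^ α := Real.rpow_pos_of_pos hL α
  have hlt : L ^ α < b / a := by
    rw [lt_div_iff₀ hLα] at h
    rwa [lt_div_iff₀ ha, mul_comm]
  exact (Real.lt_rpow_inv_iff_of_pos hL.le (hLα.trans hlt).le hα).2 hlt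

theorem Set.finite_and_ncard_lt_of_forall_mem {s : Set ℕ} {T : ℝ} (hT : 0 < T)
    (hs : ∀ n ∈ s, 1 ≤ n ∧ (n : ℝ) < T) : s.Finite ∧ (s.ncard : ℝ) < T := by
  have hsub : s ⊆ (Finset.Ico 1 ⌈T⌉₊ : Set ℕ) := fun n hn => by
    simpa using ⟨(hs n hn).1, Nat.lt_ceil.2 (hs n hn).2⟩
  have hcard : s.ncard + 1 ≤ ⌈T⌉₊ := by
    have := Set.ncard_le_ncard hsub (Finset.finite_toSet _)
    rw [Set.ncard_coe_finset, Nat.card_Ico] at this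
    have : 0 < ⌈T⌉₊ := Nat.ceil_pos.2 hT
    omega
  refine ⟨(Finset.finite_toSet _).subset hsub, ?_⟩
  have hcast : (s.ncard : ℝ) + 1 ≤ ⌈T⌉₊ := by exact_mod_cast hcard
  linarith [Nat.ceil_lt_add_one hT.le]

theorem stmt_6_general {H : Type*} [NormedAddCommGroup H] [InnerProductSpace ℂ H]
    (c : ℕ → ℂ → (H →L[ℂ] H))
    (M α : ℝ) (hM : 0 < M) (hα : 0 < α)
    (hbound : ∀ n : ℕ, 1 ≤ n → ∀ z : ℂ, z.im ≠ 0 →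
      ‖c n z‖ ≤ (M / Real.log (n + 1) ^ α) ^ n)
    (r : ℕ → ℝ → ℝ)
    (hr : ∀ (n : ℕ) (y : ℝ),
      r n y = ⨆ x : ℝ, ‖c n ((x : ℂ) + (y : ℂ) * Complex.I)‖ ^ ((1 : ℝ) / n)) :
    ∀ y : ℝ, y ≠ 0 →
      {n : ℕ | 1 ≤ n ∧ |y| / 2 < r n y}.Finite ∧
      (1 ≤ {n : ℕ | 1 ≤ n ∧ |y| / 2 < r n y}.ncard →
        Real.log {n : ℕ | 1 ≤ n ∧ |y| / 2 < r n y}.ncard < (2 * M / |y|) ^ ((1 : ℝ) / α)) := by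
  intro y hy
  set K := (2 * M / |y|) ^ ((1 : ℝ) / α)
  have hy₂ : 0 < |y| / 2 := by positivity
  have hbounded : ∀ n ∈ {n : ℕ | 1 ≤ n ∧ |y| / 2 < r n y}, 1 ≤ n ∧ (n : ℝ) < Real.exp K := by
    rintro n ⟨hn, hrn⟩
    have hL : 0 < Real.log (n + 1) := Real.log_pos (by norm_cast; omega)
    have hr_le : r n y ≤ M / Real.log (n + 1) ^ α := by
      rw [hr]
      exact iSup_rpow_one_div_le (by omega) (fun _ => norm_nonneg _) (by positivity)
        fun x => hbound n hn _ (by simpa using hy)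
    have hK : Real.log (n + 1) < K := by
      have := lt_rpow_inv_of_lt_div_rpow hy₂ hL hα (hrn.trans_le hr_le)
      rwa [div_div_eq_mul_div, mul_comm, ← one_div] at this
    exact ⟨hn, by linarith [(Real.log_lt_iff_lt_exp (by positivity)).1 hK]⟩
  obtain ⟨hfin, hcard⟩ := Set.finite_and_ncard_lt_of_forall_mem (Real.exp_pos K) hbounded
  exact ⟨hfin, fun hN => (Real.log_lt_iff_lt_exp (by exact_mod_cast hN)).2 hcard⟩

theorem stmt_6 {H : Type*} [NormedAddCommGroup H] [InnerProductSpace ℂ H] [CompleteSpace H]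
    (S V : H →L[ℂ] H) (hS : IsSelfAdjoint S)
    (c : ℕ → ℂ → (H →L[ℂ] H))
    (hc : ∀ (n : ℕ) (z : ℂ),
      c n z = (-((z.im : ℂ) • (Ring.inverse (S - algebraMap ℂ (H →L[ℂ] H) z) * V))) ^ n)
    (M α : ℝ) (hM : 0 < M) (hα : 0 < α)
    (hbound : ∀ n : ℕ, 1 ≤ n → ∀ z : ℂ, z.im ≠ 0 →
      ‖c n z‖ ≤ (M / Real.log (n + 1) ^ α) ^ n)
    (r : ℕ → ℝ → ℝ)
    (hr : ∀ (n : ℕ) (y : ℝ),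
      r n y = ⨆ x : ℝ, ‖c n ((x : ℂ) + (y : ℂ) * Complex.I)‖ ^ ((1 : ℝ) / n)) :
    ∀ y : ℝ, y ≠ 0 →
      {n : ℕ | 1 ≤ n ∧ |y| / 2 < r n y}.Finite ∧
      (1 ≤ {n : ℕ | 1 ≤ n ∧ |y| / 2 < r n y}.ncard →
        Real.log {n : ℕ | 1 ≤ n ∧ |y| / 2 < r n y}.ncard < (2 * M / |y|) ^ ((1 : ℝ) / α)) :=
  stmt_6_general c M α hM hα hbound r hr
end

section
/- Fix β > 0 and a real constant C, and define E_β(x) = ∫₀^∞ (1/Γ(s)) e^{−Cs} s^{β−1} x^{s−1} ds for x > 0. Then E_β is continuous on every interval (0,ω], and there exist δ ∈ (0,1) and K > 0 such that for all 0 < x < δ: |E_β(x) − Γ(β+1)/(x·|ln x|^{β+1})| ≤ K/(x·|ln x|^{β+2}). In particular, x·|ln x|^{β+1}·E_β(x) → Γ(β+1) as x → 0⁺. -/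
open MeasureTheory Set

open Filter Topology Real

/-! Substituting `x = e^{-L}` turns `x · E(x)` into the Laplace transform at `L + C` of
`s ↦ s ^ β / Γ(s + 1)`. Since `1 / Γ` is entire, `φ(s) = e^{-Cs} / Γ(s + 1)` satisfies
`|φ(s) - 1| ≤ M s` on `[0, ∞)` (Lipschitz near `0`, bounded at infinity because `Γ` outgrows every
exponential), so the transform differs from `∫ e^{-Ls} s^β ds = Γ(β + 1) / L^(β + 1)` by at most
`M Γ(β + 2) / L^(β + 2)`. Continuity of `E` is dominated convergence for the Laplace transform. -/

theorem Real.exp_neg_mul_rpow_le_Gamma_add_one {T s : ℝ} (hT : 0 < T) (hs : 0 ≤ s) :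
    exp (-T) * T ^ s ≤ Gamma (s + 1) := by
  have hint : IntegrableOn (fun x => exp (-x) * x ^ s) (Ioi 0) := by
    simpa using GammaIntegral_convergent (s := s + 1) (by linarith)
  calc exp (-T) * T ^ s = ∫ x in Ioi T, exp (-x) * T ^ s := by
        rw [integral_mul_const, integral_exp_neg_Ioi]
    _ ≤ ∫ x in Ioi T, exp (-x) * x ^ s :=
        setIntegral_mono_on ((integrableOn_exp_neg_Ioi T).mul_const _)
          (hint.mono_set (Ioi_subset_Ioi hT.le)) measurableSet_Ioi fun x hx =>
          mul_le_mul_of_nonneg_left (rpow_le_rpow hT.le (le_of_lt hx) hs) (exp_pos _).le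
    _ ≤ ∫ x in Ioi 0, exp (-x) * x ^ s := by
        refine setIntegral_mono_set hint ?_ (Ioi_subset_Ioi hT.le).eventuallyLE
        filter_upwards [ae_restrict_mem measurableSet_Ioi] with x hx
        exact mul_nonneg (exp_pos _).le (rpow_nonneg (le_of_lt hx) _)
    _ = Gamma (s + 1) := by rw [Gamma_eq_integral (by linarith), add_sub_cancel_right]

theorem Real.exists_exp_mul_le_mul_Gamma_add_one (b : ℝ) :
    ∃ c > 0, ∀ s, 0 ≤ s → exp (b * s) ≤ c * Gamma (s + 1) := by
  refine ⟨exp (exp |b|), exp_pos _, fun s hs => ?_⟩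
  have h := exp_neg_mul_rpow_le_Gamma_add_one (exp_pos |b|) hs
  rw [← exp_mul] at h
  calc exp (b * s) ≤ exp (|b| * s) :=
        exp_le_exp.2 (mul_le_mul_of_nonneg_right (le_abs_self b) hs)
    _ = exp (exp |b|) * (exp (-exp |b|) * exp (|b| * s)) := by
        rw [← mul_assoc, ← exp_add, add_neg_cancel, exp_zero, one_mul]
    _ ≤ exp (exp |b|) * Gamma (s + 1) := mul_le_mul_of_nonneg_left h (exp_pos _).le

theorem Real.contDiff_inv_Gamma {n : WithTop ℕ∞} : ContDiff ℝ n fun s : ℝ => (Gamma s)⁻¹ := by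
  have h : ContDiff ℝ n fun s : ℝ => ((Complex.Gamma s)⁻¹).re :=
    (Complex.differentiable_one_div_Gamma.contDiff (n := n)).real_of_complex
  have e : (fun s : ℝ => ((Complex.Gamma s)⁻¹).re) = fun s => (Gamma s)⁻¹ := by
    ext s; rw [Complex.Gamma_ofReal, ← Complex.ofReal_inv, Complex.ofReal_re]
  rwa [e] at h

theorem exists_abs_sub_le_mul_of_lipschitzOnWith {f : ℝ → ℝ} {K : NNReal} {B : ℝ}
    (hf : LipschitzOnWith K f (Icc 0 1)) (hB : ∀ s, 1 ≤ s → |f s| ≤ B) :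
    ∃ M > 0, ∀ s, 0 ≤ s → |f s - f 0| ≤ M * s := by
  refine ⟨K + |B| + |f 0| + 1, by positivity, fun s hs => ?_⟩
  rcases le_or_gt s 1 with hs1 | hs1
  · have h := hf.dist_le_mul s ⟨hs, hs1⟩ 0 ⟨le_rfl, zero_le_one⟩
    rw [dist_eq, dist_eq, sub_zero, abs_of_nonneg hs] at h
    nlinarith [abs_nonneg B, abs_nonneg (f 0)]
  · have h := hB s hs1.le
    have := abs_sub (f s) (f 0)
    nlinarith [le_abs_self B, mul_nonneg (add_nonneg (abs_nonneg B) (abs_nonneg (f 0)))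
      (sub_nonneg.2 hs1.le), mul_nonneg K.2 hs]

theorem contDiff_exp_mul_div_Gamma_add_one (C : ℝ) {n : WithTop ℕ∞} :
    ContDiff ℝ n fun s => exp (-C * s) / Gamma (s + 1) :=
  (contDiff_exp.comp (contDiff_const.mul contDiff_id)).mul
    (contDiff_inv_Gamma.comp (contDiff_id.add contDiff_const))

theorem exists_abs_exp_mul_div_Gamma_add_one_sub_one_le (C : ℝ) :
    ∃ M > 0, ∀ s, 0 ≤ s → |exp (-C * s) / Gamma (s + 1) - 1| ≤ M * s := by
  obtain ⟨K, hK⟩ := (contDiff_exp_mul_div_Gamma_add_one C (n := 1)).contDiffOn.exists_lipschitzOnWith one_ne_zero (convex_Icc 0 1) isCompact_Icc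
  obtain ⟨c, -, hc⟩ := exists_exp_mul_le_mul_Gamma_add_one (-C)
  have hbdd : ∀ s, 1 ≤ s → |exp (-C * s) / Gamma (s + 1)| ≤ c := fun s hs => by
    have hΓ : 0 < Gamma (s + 1) := Gamma_pos_of_pos (by linarith)
    rw [abs_of_pos (by positivity), div_le_iff₀ hΓ]
    exact hc s (by linarith)
  simpa using exists_abs_sub_le_mul_of_lipschitzOnWith hK hbdd

theorem integrableOn_exp_neg_mul_mul_rpow {L q : ℝ} (hL : 0 < L) (hq : -1 < q) :
    IntegrableOn (fun s => exp (-(L * s)) * s ^ q) (Ioi 0) := by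
  simpa [mul_comm] using integrableOn_rpow_mul_exp_neg_mul_rpow hq one_pos hL

theorem integral_exp_neg_mul_mul_rpow {L q : ℝ} (hL : 0 < L) (hq : -1 < q) :
    ∫ s in Ioi 0, exp (-(L * s)) * s ^ q = Gamma (q + 1) / L ^ (q + 1) := by
  have h := integral_rpow_mul_exp_neg_mul_Ioi (a := q + 1) (by linarith) hL
  rw [add_sub_cancel_right, one_div, inv_rpow hL.le] at h
  simp_rw [mul_comm (exp _)]
  rw [h, div_eq_inv_mul]

theorem integrableOn_exp_neg_mul_mul_rpow_mul_exp_div_Gamma {β : ℝ} (hβ : -1 < β) (C L : ℝ) :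
    IntegrableOn (fun s => exp (-(L * s)) * (s ^ β * (exp (-C * s) / Gamma (s + 1)))) (Ioi 0) := by
  obtain ⟨c, -, hc⟩ := exists_exp_mul_le_mul_Gamma_add_one (1 - L - C)
  refine ((integrableOn_exp_neg_mul_mul_rpow one_pos hβ).const_mul c).mono' ?_ ?_
  · refine ContinuousOn.aestronglyMeasurable ?_ measurableSet_Ioi
    refine (Continuous.continuousOn (by fun_prop)).mul
      ((continuousOn_id.rpow_const fun s hs => Or.inl (ne_of_gt hs)).mul ?_)
    exact (contDiff_exp_mul_div_Gamma_add_one C (n := 0)).continuous.continuousOn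
  · filter_upwards [ae_restrict_mem measurableSet_Ioi] with s (hs : 0 < s)
    have hΓ : 0 < Gamma (s + 1) := Gamma_pos_of_pos (by linarith)
    have hsplit : exp (-(L * s)) * exp (-C * s) = exp ((1 - L - C) * s) * exp (-(1 * s)) := by
      rw [← exp_add, ← exp_add]; ring_nf
    rw [norm_of_nonneg (by positivity)]
    calc exp (-(L * s)) * (s ^ β * (exp (-C * s) / Gamma (s + 1)))
        = exp (-(L * s)) * exp (-C * s) / Gamma (s + 1) * s ^ β := by ring
      _ = exp ((1 - L - C) * s) / Gamma (s + 1) * (exp (-(1 * s)) * s ^ β) := by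
          rw [hsplit]; ring
      _ ≤ c * (exp (-(1 * s)) * s ^ β) := by
          gcongr
          rw [div_le_iff₀ hΓ]
          exact hc s hs.le

noncomputable def laplaceTransform (g : ℝ → ℝ) (L : ℝ) : ℝ :=
  ∫ s in Ioi 0, exp (-(L * s)) * g s

theorem continuous_laplaceTransform {g : ℝ → ℝ}
    (hg : ∀ L, IntegrableOn (fun s => exp (-(L * s)) * g s) (Ioi 0)) :
    Continuous (laplaceTransform g) := by
  refine continuous_iff_continuousAt.2 fun L₀ => continuousAt_of_dominated
    (bound := fun s => ‖exp (-((L₀ - 1) * s)) * g s‖)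
    (Eventually.of_forall fun L => (hg L).aestronglyMeasurable) ?_ (hg (L₀ - 1)).norm
    (ae_of_all _ fun s => by fun_prop)
  filter_upwards [Ioi_mem_nhds (sub_one_lt L₀)] with L (hL : L₀ - 1 < L)
  filter_upwards [ae_restrict_mem measurableSet_Ioi] with s (hs : 0 < s)
  rw [norm_mul, norm_mul, norm_of_nonneg (exp_pos _).le, norm_of_nonneg (exp_pos _).le]
  gcongr

theorem abs_laplaceTransform_rpow_mul_sub_le {φ : ℝ → ℝ} {β M L : ℝ} (hβ : -1 < β) (hL : 0 < L)
    (hint : IntegrableOn (fun s => exp (-(L * s)) * (s ^ β * φ s)) (Ioi 0))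
    (hφ : ∀ s, 0 < s → |φ s - 1| ≤ M * s) :
    |laplaceTransform (fun s => s ^ β * φ s) L - Gamma (β + 1) / L ^ (β + 1)| ≤
      M * Gamma (β + 2) / L ^ (β + 2) := by
  have h2 : β + 2 = β + 1 + 1 := by ring
  rw [laplaceTransform, ← integral_exp_neg_mul_mul_rpow hL hβ,
    ← integral_sub hint (integrableOn_exp_neg_mul_mul_rpow hL hβ), h2, mul_div_assoc,
    ← integral_exp_neg_mul_mul_rpow (q := β + 1) hL (by linarith), ← integral_const_mul,
    ← norm_eq_abs]
  refine norm_integral_le_of_norm_le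
    ((integrableOn_exp_neg_mul_mul_rpow (q := β + 1) hL (by linarith)).const_mul M) ?_
  filter_upwards [ae_restrict_mem measurableSet_Ioi] with s (hs : 0 < s)
  calc ‖exp (-(L * s)) * (s ^ β * φ s) - exp (-(L * s)) * s ^ β‖
      = exp (-(L * s)) * s ^ β * |φ s - 1| := by
        rw [norm_eq_abs, ← mul_assoc, ← mul_sub_one, abs_mul, abs_of_pos (by positivity)]
    _ ≤ exp (-(L * s)) * s ^ β * (M * s) := by gcongr; exact hφ s hs
    _ = M * (exp (-(L * s)) * s ^ (β + 1)) := by rw [rpow_add_one hs.ne']; ring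

theorem integral_inv_Gamma_mul_rpow_eq_inv_mul_laplaceTransform (β C : ℝ) {x : ℝ} (hx : 0 < x) :
    ∫ s in Ioi 0, (1 / Gamma s) * exp (-C * s) * s ^ (β - 1) * x ^ (s - 1) =
      x⁻¹ * laplaceTransform (fun s => s ^ β * (exp (-C * s) / Gamma (s + 1))) (-log x) := by
  rw [laplaceTransform, ← integral_const_mul]
  refine setIntegral_congr_fun measurableSet_Ioi fun s (hs : 0 < s) => ?_
  rw [Gamma_add_one hs.ne', rpow_sub_one hx.ne', rpow_def_of_pos hx, rpow_sub_one hs.ne']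
  have := (Gamma_pos_of_pos hs).ne'
  field_simp

theorem tendsto_mul_abs_log_rpow_mul_of_abs_sub_le {f : ℝ → ℝ} {A K p δ : ℝ} (hδ : 0 < δ)
    (hδ1 : δ ≤ 1)
    (hf : ∀ x, 0 < x → x < δ → |f x - A / (x * |log x| ^ p)| ≤ K / (x * |log x| ^ (p + 1))) :
    Tendsto (fun x => x * |log x| ^ p * f x) (𝓝[>] 0) (𝓝 A) := by
  have hlog : Tendsto (fun x => |log x|) (𝓝[>] 0) atTop :=
    tendsto_abs_atBot_atTop.comp tendsto_log_nhdsGT_zero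
  refine tendsto_sub_nhds_zero_iff.1
    (squeeze_zero_norm' ?_ ((tendsto_const_nhds (x := K)).div_atTop hlog))
  filter_upwards [Ioo_mem_nhdsGT hδ] with x ⟨hx, hxδ⟩
  have hL : 0 < |log x| := abs_pos.2 (log_neg hx (by linarith)).ne
  have hxL : 0 < x * |log x| ^ p := by positivity
  calc ‖x * |log x| ^ p * f x - A‖ = |x * |log x| ^ p * (f x - A / (x * |log x| ^ p))| := by
        rw [norm_eq_abs, mul_sub, mul_div_cancel₀ _ hxL.ne']
    _ = x * |log x| ^ p * |f x - A / (x * |log x| ^ p)| := by rw [abs_mul, abs_of_pos hxL]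
    _ ≤ x * |log x| ^ p * (K / (x * |log x| ^ (p + 1))) := by gcongr; exact hf x hx hxδ
    _ = K / |log x| := by rw [rpow_add_one hL.ne']; field_simp
theorem stmt_9 (β : ℝ) (hβ : 0 < β) (C : ℝ) (E : ℝ → ℝ)
    (hE : ∀ x : ℝ, 0 < x →
      E x = ∫ s in Ioi (0 : ℝ),
        (1 / Real.Gamma s) * Real.exp (-C * s) * s ^ (β - 1) * x ^ (s - 1)) :
    (∀ ω : ℝ, 0 < ω → ContinuousOn E (Ioc 0 ω)) ∧
    (∃ δ : ℝ, 0 < δ ∧ δ < 1 ∧ ∃ K > (0 : ℝ), ∀ x : ℝ, 0 < x → x < δ →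
      |E x - Real.Gamma (β + 1) / (x * |Real.log x| ^ (β + 1))| ≤
        K / (x * |Real.log x| ^ (β + 2))) ∧
    Filter.Tendsto (fun x : ℝ => x * |Real.log x| ^ (β + 1) * E x)
      (nhdsWithin 0 (Ioi 0)) (nhds (Real.Gamma (β + 1))) := by
  obtain ⟨M, hM, hφ⟩ := exists_abs_exp_mul_div_Gamma_add_one_sub_one_le C
  have hint := integrableOn_exp_neg_mul_mul_rpow_mul_exp_div_Gamma (by linarith : -1 < β) C
  have hEF : ∀ x, 0 < x → E x = x⁻¹ *
      laplaceTransform (fun s => s ^ β * (exp (-C * s) / Gamma (s + 1))) (-log x) := fun x hx =>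
    (hE x hx).trans (integral_inv_Gamma_mul_rpow_eq_inv_mul_laplaceTransform β C hx)
  have hasymp : ∀ x, 0 < x → x < 1 / 2 → |E x - Gamma (β + 1) / (x * |log x| ^ (β + 1))| ≤
      M * Gamma (β + 2) / (x * |log x| ^ (β + 2)) := by
    intro x hx hx2
    have hlog : log x < 0 := log_neg hx (by linarith)
    have hdiv : ∀ a b : ℝ, a / (x * b) = x⁻¹ * (a / b) := fun a b => by ring
    rw [hEF x hx, abs_of_neg hlog, hdiv, hdiv, ← mul_sub, abs_mul, abs_of_pos (inv_pos.2 hx)]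
    exact mul_le_mul_of_nonneg_left (abs_laplaceTransform_rpow_mul_sub_le (by linarith)
      (neg_pos.2 hlog) (hint _) fun s hs => hφ s hs.le) (inv_nonneg.2 hx.le)
  have hΓ : 0 < Gamma (β + 2) := Gamma_pos_of_pos (by linarith)
  refine ⟨fun ω _ => ?_, ⟨1 / 2, by norm_num, by norm_num, M * Gamma (β + 2), by positivity,
    hasymp⟩, ?_⟩
  · refine ContinuousOn.mono (fun x hx => ?_) Ioc_subset_Ioi_self
    refine ContinuousWithinAt.congr ?_ (fun y hy => hEF y hy) (hEF x hx)
    exact ((continuousAt_inv₀ (ne_of_gt hx)).mul ((continuous_laplaceTransform hint).continuousAt.comp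
      (continuousAt_log (ne_of_gt hx)).neg)).continuousWithinAt
  · refine tendsto_mul_abs_log_rpow_mul_of_abs_sub_le (K := M * Gamma (β + 2)) (δ := 1 / 2)
      (by norm_num) (by norm_num) fun x hx hx2 => ?_
    rw [add_assoc, one_add_one_eq_two]
    exact hasymp x hx hx2
end

section
/- Fix ω > 0, β > 0, and a real constant C, and define E_β(x) = ∫₀^∞ (1/Γ(s)) e^{−Cs} s^{β−1} x^{s−1} ds for x > 0. Then E_β is integrable on (0,ω), i.e., m(β) := (1/Γ(β)) ∫₀^ω E_β(x) dx < ∞, and for every p ≥ 1 and every f ∈ L^p(0,ω), the function (V_β f)(x) = (1/Γ(β)) ∫₀ˣ E_β(x−t) f(t) dt belongs to L^p(0,ω) and satisfies ‖V_β f‖_{L^p} ≤ m(β)·‖f‖_{L^p}. -/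
/-!
Integrability of `E_β` is Tonelli: integrating `x ^ (s - 1)` over `(0, ω)` first leaves
`s ^ (β - 1) (e ^ (-C) ω) ^ s / Γ(s + 1)`, and the elementary bound
`Γ(s + 1) ≥ K ^ (s + 1) e ^ (-2K)` (from the integral over `[K, 2K]`), with `K` large, makes this at
most `M s ^ (β - 1) e ^ (-s)`, whose integral is `M Γ(β)`.

On `(0, ω)`, `V_β f` is the convolution of the restrictions of `E_β / Γ(β)` and `f` to `(0, ω)`,
so the `Lᵖ` bound is Young's inequality `‖k ⋆ f‖_p ≤ ‖k‖₁ ‖f‖_p`, with `‖E_β‖₁ = ∫₀^ω E_β`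
because `E_β ≥ 0`. Young's inequality is Hölder's inequality applied to the splitting
`k = k ^ (1/p) k ^ (1 - 1/p)`, followed by Tonelli.
-/

open MeasureTheory Set
open scoped ENNReal

theorem Real.rpow_mul_exp_neg_two_mul_le_Gamma {K s : ℝ} (hK : 0 < K) (hs : 1 ≤ s) :
    K ^ s * Real.exp (-(2 * K)) ≤ Real.Gamma s := by
  have hs0 : 0 < s := zero_lt_one.trans_le hs
  have hsub : Ioc K (2 * K) ⊆ Ioi 0 := fun t ht => hK.trans ht.1
  rw [Real.Gamma_eq_integral hs0]
  calc K ^ s * Real.exp (-(2 * K))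
      = ∫ _ in Ioc K (2 * K), K ^ (s - 1) * Real.exp (-(2 * K)) := by
        rw [setIntegral_const, Real.volume_real_Ioc_of_le (by linarith), smul_eq_mul,
          show 2 * K - K = K by ring, ← mul_assoc, mul_comm K,
          ← Real.rpow_add_one hK.ne', sub_add_cancel]
    _ ≤ ∫ t in Ioc K (2 * K), Real.exp (-t) * t ^ (s - 1) := by
        refine setIntegral_mono_on (integrableOn_const measure_Ioc_lt_top.ne)
          ((Real.GammaIntegral_convergent hs0).mono_set hsub) measurableSet_Ioc fun t ht => ?_
        rw [mul_comm]
        exact mul_le_mul (Real.exp_le_exp.mpr (by linarith [ht.2]))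
          (Real.rpow_le_rpow hK.le ht.1.le (by linarith)) (by positivity) (by positivity)
    _ ≤ ∫ t in Ioi 0, Real.exp (-t) * t ^ (s - 1) :=
        setIntegral_mono_set (Real.GammaIntegral_convergent hs0)
          ((ae_restrict_mem measurableSet_Ioi).mono fun t (ht : 0 < t) => by positivity)
          hsub.eventuallyLE

theorem Real.exists_rpow_div_Gamma_add_one_le {a : ℝ} (ha : 0 ≤ a) :
    ∃ M, ∀ s, 0 ≤ s → a ^ s / Real.Gamma (s + 1) ≤ M * Real.exp (-s) := by
  set K := a * Real.exp 1 + 1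
  have hK : 0 < K := by positivity
  refine ⟨Real.exp (2 * K) / K, fun s hs => ?_⟩
  have hΓ := Real.rpow_mul_exp_neg_two_mul_le_Gamma hK (by linarith : 1 ≤ s + 1)
  -- `K ≥ a e` makes `(a / K) ^ s` decay like `e ^ (-s)`
  have hratio : a / K ≤ Real.exp (-1) := by
    rw [div_le_iff₀ hK, Real.exp_neg, ← div_eq_inv_mul, le_div_iff₀ (Real.exp_pos 1)]
    linarith
  calc a ^ s / Real.Gamma (s + 1)
      ≤ a ^ s / (K ^ (s + 1) * Real.exp (-(2 * K))) :=
        div_le_div_of_nonneg_left (by positivity) (by positivity) hΓ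
    _ = Real.exp (2 * K) / K * (a / K) ^ s := by
        rw [Real.div_rpow ha hK.le, Real.rpow_add_one hK.ne', Real.exp_neg]
        field_simp
    _ ≤ Real.exp (2 * K) / K * Real.exp (-1) ^ s :=
        mul_le_mul_of_nonneg_left (Real.rpow_le_rpow (by positivity) hratio hs) (by positivity)
    _ = Real.exp (2 * K) / K * Real.exp (-s) := by
        rw [← Real.exp_mul, neg_one_mul]

/-- `E_β(x) = ∫₀^∞ kernelIntegrand β C x s ds`. -/
noncomputable def kernelIntegrand (β C x s : ℝ) : ℝ :=
  1 / Real.Gamma s * Real.exp (-C * s) * s ^ (β - 1) * x ^ (s - 1)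

section Kernel

variable {β C : ℝ}

theorem kernelIntegrand_nonneg {x s : ℝ} (hx : 0 ≤ x) (hs : 0 < s) :
    0 ≤ kernelIntegrand β C x s := by
  have := Real.Gamma_pos_of_pos hs
  unfold kernelIntegrand
  positivity

theorem continuousOn_kernelIntegrand :
    ContinuousOn (Function.uncurry (kernelIntegrand β C)) (Ioi 0 ×ˢ Ioi 0) := by
  have hΓ : ContinuousOn (fun q : ℝ × ℝ => Real.Gamma q.2) (Ioi 0 ×ˢ Ioi 0) :=
    Real.differentiableOn_Gamma_Ioi.continuousOn.comp continuousOn_snd fun q hq => hq.2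
  refine (((continuousOn_const.div hΓ fun q hq => (Real.Gamma_pos_of_pos hq.2).ne').mul
    (by fun_prop)).mul ?_).mul ?_
  · exact continuousOn_snd.rpow_const fun q hq => Or.inl (ne_of_gt hq.2)
  · exact continuousOn_fst.rpow (by fun_prop) fun q hq => Or.inl (ne_of_gt hq.1)

theorem integral_kernelIntegrand_Ioo {ω s : ℝ} (hω : 0 ≤ ω) (hs : 0 < s) :
    ∫ x in Ioo 0 ω, kernelIntegrand β C x s =
      s ^ (β - 1) * (Real.exp (-C) * ω) ^ s / Real.Gamma (s + 1) := by
  have hrpow : ∫ x in Ioo 0 ω, x ^ (s - 1) = ω ^ s / s := by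
    rw [← integral_Ioc_eq_integral_Ioo, ← intervalIntegral.integral_of_le hω,
      integral_rpow (Or.inl (by linarith)), sub_add_cancel, Real.zero_rpow hs.ne', sub_zero]
  simp only [kernelIntegrand]
  rw [integral_const_mul, hrpow, Real.Gamma_add_one hs.ne',
    Real.mul_rpow (Real.exp_pos _).le hω, ← Real.exp_mul]
  have := Real.Gamma_pos_of_pos hs
  field_simp

theorem integrable_kernelIntegrand {ω : ℝ} (hω : 0 ≤ ω) (hβ : 0 < β) :
    Integrable (Function.uncurry (kernelIntegrand β C))
      ((volume.restrict (Ioo 0 ω)).prod (volume.restrict (Ioi 0))) := by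
  have hmeas : AEStronglyMeasurable (Function.uncurry (kernelIntegrand β C))
      ((volume.restrict (Ioo 0 ω)).prod (volume.restrict (Ioi 0))) := by
    rw [Measure.prod_restrict]
    exact (continuousOn_kernelIntegrand.mono (prod_mono Ioo_subset_Ioi_self subset_rfl))
      |>.aestronglyMeasurable (measurableSet_Ioo.prod measurableSet_Ioi)
  obtain ⟨M, hM⟩ :=
    Real.exists_rpow_div_Gamma_add_one_le (by positivity : 0 ≤ Real.exp (-C) * ω)
  refine (integrable_prod_iff' hmeas).mpr ⟨?_, ?_⟩
  · filter_upwards [ae_restrict_mem measurableSet_Ioi] with s hs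
    have := intervalIntegral.intervalIntegrable_rpow' (a := 0) (b := ω)
      (by linarith [mem_Ioi.mp hs] : (-1 : ℝ) < s - 1)
    rw [intervalIntegrable_iff_integrableOn_Ioc_of_le hω] at this
    exact (this.mono_set Ioo_subset_Ioc_self).const_mul
      (1 / Real.Gamma s * Real.exp (-C * s) * s ^ (β - 1))
  · refine ((Real.GammaIntegral_convergent hβ).const_mul M).mono'
      hmeas.norm.prod_swap.integral_prod_right' ?_
    filter_upwards [ae_restrict_mem measurableSet_Ioi] with s (hs : 0 < s)
    have hnorm : ∫ x in Ioo 0 ω, ‖kernelIntegrand β C x s‖ =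
        ∫ x in Ioo 0 ω, kernelIntegrand β C x s :=
      setIntegral_congr_fun measurableSet_Ioo fun x hx =>
        Real.norm_of_nonneg (kernelIntegrand_nonneg hx.1.le hs)
    rw [Real.norm_of_nonneg (integral_nonneg fun _ => norm_nonneg _)]
    calc ∫ x in Ioo 0 ω, ‖kernelIntegrand β C x s‖
        = s ^ (β - 1) * ((Real.exp (-C) * ω) ^ s / Real.Gamma (s + 1)) := by
          rw [hnorm, integral_kernelIntegrand_Ioo hω hs, mul_div_assoc]
      _ ≤ s ^ (β - 1) * (M * Real.exp (-s)) :=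
          mul_le_mul_of_nonneg_left (hM s hs.le) (by positivity)
      _ = M * (Real.exp (-s) * s ^ (β - 1)) := by ring

theorem integrableOn_of_eq_integral_kernelIntegrand {ω : ℝ} (hω : 0 ≤ ω) (hβ : 0 < β)
    {E : ℝ → ℝ} (hE : ∀ x, 0 < x → E x = ∫ s in Ioi 0, kernelIntegrand β C x s) :
    IntegrableOn E (Ioo 0 ω) :=
  (integrable_kernelIntegrand hω hβ).integral_prod_left.congr <| by
    filter_upwards [ae_restrict_mem measurableSet_Ioo] with x hx
    exact (hE x hx.1).symm

end Kernel

section Young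

variable {G : Type*} [MeasurableSpace G] [AddCommGroup G] [MeasurableAdd₂ G] [MeasurableNeg G]
  {μ : Measure G} [SFinite μ] [μ.IsAddLeftInvariant]

theorem AEMeasurable.convolution_integrand_mul {K F : G → ℝ≥0∞} (hK : AEMeasurable K μ)
    (hF : AEMeasurable F μ) :
    AEMeasurable (fun q : G × G => K (q.1 - q.2) * F q.2) (μ.prod μ) :=
  (hK.comp_quasiMeasurePreserving (quasiMeasurePreserving_sub_of_right_invariant μ μ)).mul
    hF.comp_snd

theorem lintegral_lintegral_sub_mul {K F : G → ℝ≥0∞} (hK : AEMeasurable K μ)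
    (hF : AEMeasurable F μ) :
    ∫⁻ x, ∫⁻ t, K (x - t) * F t ∂μ ∂μ = (∫⁻ u, K u ∂μ) * ∫⁻ t, F t ∂μ := by
  rw [lintegral_lintegral_swap (hK.convolution_integrand_mul hF), ← lintegral_const_mul'' _ hF]
  refine lintegral_congr fun t => ?_
  have hKt : AEMeasurable (fun x => K (x - t)) μ :=
    hK.comp_quasiMeasurePreserving (measurePreserving_sub_right μ t).quasiMeasurePreserving
  rw [lintegral_mul_const'' _ hKt, lintegral_sub_right_eq_self]

theorem lintegral_sub_mul_rpow_le [μ.IsNegInvariant] {K F : G → ℝ≥0∞} (hK : AEMeasurable K μ)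
    (hF : AEMeasurable F μ) {p : ℝ} (hp : 1 ≤ p) (x : G) :
    (∫⁻ t, K (x - t) * F t ∂μ) ^ p ≤
      (∫⁻ t, K (x - t) * F t ^ p ∂μ) * (∫⁻ u, K u ∂μ) ^ (p - 1) := by
  have hp0 : 0 < p := by linarith
  have hKx : AEMeasurable (fun t => K (x - t)) μ :=
    hK.comp_quasiMeasurePreserving (quasiMeasurePreserving_sub_left_of_right_invariant μ x)
  -- Hölder with exponents `1/p` and `1 - 1/p`, splitting `K` between the two factors
  have hq : 0 ≤ 1 - 1 / p := sub_nonneg.mpr ((div_le_one hp0).mpr hp)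
  have holder := ENNReal.lintegral_mul_norm_pow_le (hKx.mul (hF.pow_const p)) hKx
    (by positivity : 0 ≤ 1 / p) hq (add_sub_cancel _ _)
  have split : ∀ t,
      (K (x - t) * F t ^ p) ^ (1 / p) * K (x - t) ^ (1 - 1 / p) = K (x - t) * F t := by
    intro t
    rw [ENNReal.mul_rpow_of_nonneg _ _ (by positivity), ← ENNReal.rpow_mul,
      mul_one_div_cancel hp0.ne', ENNReal.rpow_one, mul_right_comm,
      ← ENNReal.rpow_add_of_nonneg _ _ (by positivity) hq, add_sub_cancel, ENNReal.rpow_one]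
  simp only [Pi.mul_apply, split, lintegral_sub_left_eq_self (fun u => K u)] at holder
  calc (∫⁻ t, K (x - t) * F t ∂μ) ^ p
      ≤ ((∫⁻ t, K (x - t) * F t ^ p ∂μ) ^ (1 / p) * (∫⁻ u, K u ∂μ) ^ (1 - 1 / p)) ^ p :=
        ENNReal.rpow_le_rpow holder hp0.le
    _ = (∫⁻ t, K (x - t) * F t ^ p ∂μ) * (∫⁻ u, K u ∂μ) ^ (p - 1) := by
        rw [ENNReal.mul_rpow_of_nonneg _ _ hp0.le, ← ENNReal.rpow_mul, ← ENNReal.rpow_mul,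
          one_div_mul_cancel hp0.ne', ENNReal.rpow_one, sub_mul, one_mul,
          one_div_mul_cancel hp0.ne']

theorem lintegral_lintegral_sub_mul_rpow_le [μ.IsNegInvariant] {K F : G → ℝ≥0∞}
    (hK : AEMeasurable K μ) (hF : AEMeasurable F μ) {p : ℝ} (hp : 1 ≤ p) :
    ∫⁻ x, (∫⁻ t, K (x - t) * F t ∂μ) ^ p ∂μ ≤ (∫⁻ u, K u ∂μ) ^ p * ∫⁻ t, F t ^ p ∂μ := by
  set A := ∫⁻ u, K u ∂μ
  calc ∫⁻ x, (∫⁻ t, K (x - t) * F t ∂μ) ^ p ∂μ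
      ≤ ∫⁻ x, (∫⁻ t, K (x - t) * F t ^ p ∂μ) * A ^ (p - 1) ∂μ :=
        lintegral_mono fun x => lintegral_sub_mul_rpow_le hK hF hp x
    _ = (A * ∫⁻ t, F t ^ p ∂μ) * A ^ (p - 1) := by
        rw [lintegral_mul_const'' _
            (hK.convolution_integrand_mul (hF.pow_const p)).lintegral_prod_right',
          lintegral_lintegral_sub_mul hK (hF.pow_const p)]
    _ = A ^ p * ∫⁻ t, F t ^ p ∂μ := by
        nth_rw 1 [← ENNReal.rpow_one A]
        rw [mul_right_comm, ← ENNReal.rpow_add_of_nonneg _ _ zero_le_one (by linarith),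
          add_sub_cancel]

/-- Young's convolution inequality for `L¹ ⋆ Lᵖ`. -/
theorem eLpNorm_lintegral_sub_mul_le [μ.IsNegInvariant] {K F : G → ℝ≥0∞}
    (hK : AEMeasurable K μ) (hF : AEMeasurable F μ) {p : ℝ} (hp : 1 ≤ p) :
    eLpNorm (fun x => ∫⁻ t, K (x - t) * F t ∂μ) (ENNReal.ofReal p) μ ≤
      (∫⁻ u, K u ∂μ) * eLpNorm F (ENNReal.ofReal p) μ := by
  have hp0 : 0 < p := by linarith
  have hP0 : ENNReal.ofReal p ≠ 0 := (ENNReal.ofReal_pos.mpr hp0).ne'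
  simp only [eLpNorm_eq_lintegral_rpow_enorm_toReal hP0 ENNReal.ofReal_ne_top,
    ENNReal.toReal_ofReal hp0.le, enorm_eq_self]
  calc (∫⁻ x, (∫⁻ t, K (x - t) * F t ∂μ) ^ p ∂μ) ^ (1 / p)
      ≤ ((∫⁻ u, K u ∂μ) ^ p * ∫⁻ t, F t ^ p ∂μ) ^ (1 / p) :=
        ENNReal.rpow_le_rpow (lintegral_lintegral_sub_mul_rpow_le hK hF hp) (by positivity)
    _ = (∫⁻ u, K u ∂μ) * (∫⁻ t, F t ^ p ∂μ) ^ (1 / p) := by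
        rw [ENNReal.mul_rpow_of_nonneg _ _ (by positivity), ← ENNReal.rpow_mul,
          mul_one_div_cancel hp0.ne', ENNReal.rpow_one]

end Young

theorem indicator_Ioo_sub_mul {M : Type*} [MulZeroClass M] (k f : ℝ → M) {x ω : ℝ} (hx : x ≤ ω)
    (t : ℝ) :
    (Ioo 0 x).indicator (fun t => k (x - t) * f t) t =
      (Ioo 0 ω).indicator k (x - t) * (Ioo 0 ω).indicator f t := by
  by_cases ht : t ∈ Ioo 0 x
  · rw [indicator_of_mem ht, indicator_of_mem (show x - t ∈ Ioo 0 ω from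
      ⟨sub_pos.2 ht.2, by linarith [ht.1]⟩), indicator_of_mem (show t ∈ Ioo 0 ω from
      ⟨ht.1, ht.2.trans_le hx⟩)]
  · rw [indicator_of_notMem ht]
    rcases (not_and_or.mp ht).imp le_of_not_gt le_of_not_gt with ht | ht
    · rw [indicator_of_notMem (fun h => ht.not_gt h.1) f, mul_zero]
    · rw [indicator_of_notMem (fun h => (sub_nonpos.2 ht).not_gt h.1) k, zero_mul]

section Volterra

variable {𝕜 : Type*} [NormedRing 𝕜] [NormedSpace ℝ 𝕜] {ω : ℝ}

theorem setIntegral_Ioo_sub_mul_eq_integral (k f : ℝ → 𝕜) {x : ℝ} (hx : x ≤ ω) :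
    ∫ t in Ioo 0 x, k (x - t) * f t =
      ∫ t, (Ioo 0 ω).indicator k (x - t) * (Ioo 0 ω).indicator f t := by
  rw [← integral_indicator measurableSet_Ioo]
  exact integral_congr_ae (.of_forall (indicator_Ioo_sub_mul k f hx))

theorem memLp_setIntegral_Ioo_sub_mul_and_eLpNorm_le [NormMulClass 𝕜] {k f : ℝ → 𝕜}
    (hk : IntegrableOn k (Ioo 0 ω)) {p : ℝ} (hp : 1 ≤ p)
    (hf : MemLp f (ENNReal.ofReal p) (volume.restrict (Ioo 0 ω))) :
    MemLp (fun x => ∫ t in Ioo 0 x, k (x - t) * f t) (ENNReal.ofReal p)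
        (volume.restrict (Ioo 0 ω)) ∧
      eLpNorm (fun x => ∫ t in Ioo 0 x, k (x - t) * f t) (ENNReal.ofReal p)
          (volume.restrict (Ioo 0 ω)) ≤
        eLpNorm k 1 (volume.restrict (Ioo 0 ω)) *
          eLpNorm f (ENNReal.ofReal p) (volume.restrict (Ioo 0 ω)) := by
  set k' := (Ioo 0 ω).indicator k
  set f' := (Ioo 0 ω).indicator f
  set g : ℝ → 𝕜 := fun x => ∫ t, k' (x - t) * f' t
  have hk' : AEStronglyMeasurable k' volume :=
    (aestronglyMeasurable_indicator_iff measurableSet_Ioo).mpr hk.1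
  have hf' : AEStronglyMeasurable f' volume :=
    (aestronglyMeasurable_indicator_iff measurableSet_Ioo).mpr hf.1
  have hg : AEStronglyMeasurable g volume :=
    ((hk'.comp_quasiMeasurePreserving
      (quasiMeasurePreserving_sub_of_right_invariant volume volume)).mul
        hf'.comp_snd).integral_prod_right'
  have hg_eq : (fun x => ∫ t in Ioo 0 x, k (x - t) * f t) =ᵐ[volume.restrict (Ioo 0 ω)] g := by
    filter_upwards [ae_restrict_mem measurableSet_Ioo] with x hx
    exact setIntegral_Ioo_sub_mul_eq_integral k f hx.2.le
  have young : eLpNorm g (ENNReal.ofReal p) volume ≤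
      eLpNorm k 1 (volume.restrict (Ioo 0 ω)) *
        eLpNorm f (ENNReal.ofReal p) (volume.restrict (Ioo 0 ω)) := by
    calc eLpNorm g (ENNReal.ofReal p) volume
        ≤ eLpNorm (fun x => ∫⁻ t, ‖k' (x - t)‖ₑ * ‖f' t‖ₑ) (ENNReal.ofReal p) volume := by
          refine eLpNorm_mono_enorm fun x => ?_
          simpa only [enorm_mul, enorm_eq_self] using
            enorm_integral_le_lintegral_enorm (fun t => k' (x - t) * f' t)
      _ ≤ (∫⁻ u, ‖k' u‖ₑ) * eLpNorm (fun t => ‖f' t‖ₑ) (ENNReal.ofReal p) volume :=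
          eLpNorm_lintegral_sub_mul_le hk'.enorm hf'.enorm hp
      _ = eLpNorm k 1 (volume.restrict (Ioo 0 ω)) *
            eLpNorm f (ENNReal.ofReal p) (volume.restrict (Ioo 0 ω)) := by
          rw [eLpNorm_enorm, ← eLpNorm_one_eq_lintegral_enorm,
            eLpNorm_indicator_eq_eLpNorm_restrict measurableSet_Ioo,
            eLpNorm_indicator_eq_eLpNorm_restrict measurableSet_Ioo]
  have bound := (eLpNorm_congr_ae hg_eq).trans_le ((eLpNorm_restrict_le _ _ _ _).trans young)
  refine ⟨⟨hg.restrict.congr hg_eq.symm, bound.trans_lt ?_⟩, bound⟩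
  exact ENNReal.mul_lt_top (memLp_one_iff_integrable.2 hk).eLpNorm_lt_top hf.eLpNorm_lt_top

end Volterra

theorem eLpNorm_one_ofReal_eq_ofReal_integral {α : Type*} [MeasurableSpace α] {μ : Measure α}
    {g : α → ℝ} (hg : Integrable g μ) (hg0 : 0 ≤ᵐ[μ] g) :
    eLpNorm (fun x => (g x : ℂ)) 1 μ = ENNReal.ofReal (∫ x, g x ∂μ) := by
  rw [eLpNorm_one_eq_lintegral_enorm, ofReal_integral_eq_lintegral_ofReal hg hg0]
  refine lintegral_congr_ae ?_
  filter_upwards [hg0] with x hx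
  rw [← enorm_norm, Complex.norm_real, enorm_norm, Real.enorm_eq_ofReal hx]

theorem stmt_10 (ω : ℝ) (hω : 0 < ω) (β : ℝ) (hβ : 0 < β) (C : ℝ) (E : ℝ → ℝ)
    (hE : ∀ x : ℝ, 0 < x →
      E x = ∫ s in Ioi (0 : ℝ),
        (1 / Real.Gamma s) * Real.exp (-C * s) * s ^ (β - 1) * x ^ (s - 1)) :
    IntegrableOn E (Ioo 0 ω) volume ∧
    ∀ p : ℝ, 1 ≤ p → ∀ f : ℝ → ℂ,
      MemLp f (ENNReal.ofReal p) (volume.restrict (Ioo 0 ω)) →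
      MemLp (fun x : ℝ => (1 / Real.Gamma β : ℝ) • ∫ t in Ioo (0 : ℝ) x, (E (x - t) : ℂ) * f t)
        (ENNReal.ofReal p) (volume.restrict (Ioo 0 ω)) ∧
      eLpNorm
          (fun x : ℝ => (1 / Real.Gamma β : ℝ) • ∫ t in Ioo (0 : ℝ) x, (E (x - t) : ℂ) * f t)
          (ENNReal.ofReal p) (volume.restrict (Ioo 0 ω)) ≤
        ENNReal.ofReal ((1 / Real.Gamma β) * ∫ x in Ioo (0 : ℝ) ω, E x) *
          eLpNorm f (ENNReal.ofReal p) (volume.restrict (Ioo 0 ω)) := by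
  have hint : IntegrableOn E (Ioo 0 ω) :=
    integrableOn_of_eq_integral_kernelIntegrand hω.le hβ hE
  refine ⟨hint, fun p hp f hf => ?_⟩
  have hE_nonneg : 0 ≤ᵐ[volume.restrict (Ioo 0 ω)] E := by
    filter_upwards [ae_restrict_mem measurableSet_Ioo] with x hx
    rw [hE x hx.1]
    exact setIntegral_nonneg measurableSet_Ioi fun s hs => kernelIntegrand_nonneg hx.1.le hs
  have hc : 0 ≤ 1 / Real.Gamma β := one_div_nonneg.mpr (Real.Gamma_pos_of_pos hβ).le
  obtain ⟨hmem, hle⟩ := memLp_setIntegral_Ioo_sub_mul_and_eLpNorm_le hint.ofReal hp hf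
  refine ⟨hmem.const_smul (1 / Real.Gamma β), ?_⟩
  rw [ENNReal.ofReal_mul hc, ← eLpNorm_one_ofReal_eq_ofReal_integral hint hE_nonneg, mul_assoc,
    ← Real.enorm_eq_ofReal hc]
  exact (eLpNorm_const_smul (1 / Real.Gamma β)
    (fun x => ∫ t in Ioo (0 : ℝ) x, (E (x - t) : ℂ) * f t) _ _).trans_le
      (mul_le_mul_right hle _)
end

section
/- Fix ω > 0. Let s : (0,ω) → ℂ satisfy s ∈ L²(0,ω), s differentiable on (0,ω), and x^{1/2}·s′(x) ∈ L¹(0,ω). Let T be a bounded operator on L²(0,ω) such that for every f ∈ L²(0,ω), (Tf)(x) = (d/dx)∫₀ˣ s(x−t)f(t)dt for almost every x. Define s̃₁(ξ) = ∫₀^ω e^{itξ} s(t)(1 − t/ω) dt. Suppose there exist two distinct complex numbers β₁ ≠ β₂ such that each β_j is a limit of −iξ_k·s̃₁(ξ_k) along some real sequence (ξ_k) with ξ_k → +∞ or ξ_k → −∞. Then there is no essentially bounded measurable function φ : (0,ω) → ℂ and no compact operator V on L²(0,ω) such that (Tf)(x) = φ(x)f(x) + (Vf)(x) for all f ∈ L²(0,ω).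 -/
/-!
Test `T` against the plane waves `e_ξ(x) = e^{-iξx}`. The convolution `∫₀ᵘ s(u - t) e_ξ(t) dt`
equals `e_ξ(u) ∫₀ᵘ e^{iξt} s(t) dt`, so differentiating and integrating the primitive by parts gives
`⟪e_ξ, T e_ξ⟫ = ω · (-iξ s̃₁(ξ)) + ∫₀^ω e^{iξt} s(t) dt`, whose last term vanishes as `|ξ| → ∞` by
Riemann–Lebesgue. If `T = φ + V`, then `⟪e_ξ, T e_ξ⟫ = ∫ φ + ⟪e_ξ, V e_ξ⟫` because `|e_ξ| = 1`, and
the last term vanishes since `e_ξ → 0` weakly and `V` is compact. Hence every limit `β` satisfies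
`ω β = ∫ φ`, so there cannot be two of them.
-/

open MeasureTheory Set Filter Topology Complex

theorem IsCompactOperator.tendsto_apply_zero {𝕜 E F : Type*} [RCLike 𝕜]
    [NormedAddCommGroup E] [NormedSpace 𝕜 E] [NormedAddCommGroup F] [NormedSpace 𝕜 F]
    {V : E →L[𝕜] F} (hV : IsCompactOperator V) {u : ℕ → E}
    (hu : Bornology.IsBounded (range u))
    (hweak : ∀ ℓ : StrongDual 𝕜 E, Tendsto (fun k => ℓ (u k)) atTop (𝓝 0)) :
    Tendsto (fun k => V (u k)) atTop (𝓝 0) := by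
  obtain ⟨K, hK, hVK⟩ := hV.image_subset_compact_of_bounded (f := (V : E →ₗ[𝕜] F)) hu
  refine tendsto_of_subseq_tendsto fun ns hns => ?_
  obtain ⟨w, -, ms, hms, hlim⟩ :=
    hK.tendsto_subseq fun n => hVK (mem_image_of_mem _ (mem_range_self (ns n)))
  suffices w = 0 from ⟨ms, this ▸ hlim⟩
  refine SeparatingDual.eq_zero_of_forall_dual_eq_zero (R := 𝕜) fun ℓ => tendsto_nhds_unique
    ((ℓ.continuous.tendsto w).comp hlim) ?_
  exact (hweak (ℓ.comp V)).comp (hns.comp hms.tendsto_atTop)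

theorem IsCompactOperator.tendsto_inner_apply_zero {𝕜 E : Type*} [RCLike 𝕜]
    [NormedAddCommGroup E] [InnerProductSpace 𝕜 E] {V : E →L[𝕜] E} (hV : IsCompactOperator V)
    {u : ℕ → E} (hu : Bornology.IsBounded (range u))
    (hweak : ∀ ℓ : StrongDual 𝕜 E, Tendsto (fun k => ℓ (u k)) atTop (𝓝 0)) :
    Tendsto (fun k => inner 𝕜 (u k) (V (u k))) atTop (𝓝 0) := by
  obtain ⟨C, hC⟩ := isBounded_iff_forall_norm_le.mp hu
  have hVu := (hV.tendsto_apply_zero hu hweak).norm.const_mul C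
  rw [norm_zero, mul_zero] at hVu
  refine squeeze_zero_norm (fun k => ?_) hVu
  exact (norm_inner_le_norm _ _).trans
    (mul_le_mul_of_nonneg_right (hC _ (mem_range_self k)) (norm_nonneg _))

theorem tendsto_integral_exp_mul_cocompact (g : ℝ → ℂ) :
    Tendsto (fun ξ : ℝ => ∫ t : ℝ, exp (I * t * ξ) * g t) (cocompact ℝ) (𝓝 0) := by
  have h2π : -(2 * Real.pi)⁻¹ ≠ 0 := by simp [Real.pi_ne_zero]
  refine ((Real.tendsto_integral_exp_smul_cocompact g).comp
    (tendsto_cocompact_mul_right₀ h2π)).congr fun ξ => integral_congr_ae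
    (Eventually.of_forall fun t => ?_)
  rw [Circle.smul_def, Real.fourierChar_apply]
  congr 2
  push_cast
  field_simp

theorem tendsto_setIntegral_exp_mul_cocompact {S : Set ℝ} (hS : MeasurableSet S) (g : ℝ → ℂ) :
    Tendsto (fun ξ : ℝ => ∫ t in S, exp (I * t * ξ) * g t) (cocompact ℝ) (𝓝 0) := by
  refine (tendsto_integral_exp_mul_cocompact (S.indicator g)).congr fun ξ => ?_
  rw [← integral_indicator hS]
  refine integral_congr_ae (Eventually.of_forall fun t => ?_)
  by_cases ht : t ∈ S <;> simp [ht]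

theorem tendsto_cocompact_of_tendsto_atTop_or_atBot {ι : Type*} {l : Filter ι} {ξ : ι → ℝ}
    (hξ : Tendsto ξ l atTop ∨ Tendsto ξ l atBot) : Tendsto ξ l (cocompact ℝ) := by
  rw [cocompact_eq_atBot_atTop]
  exact hξ.elim (·.mono_right le_sup_right) (·.mono_right le_sup_left)

theorem integral_primitive_eq_integral_sub_smul {E : Type*} [NormedAddCommGroup E]
    [NormedSpace ℝ E] [CompleteSpace E] {g : ℝ → E} {a b : ℝ} (hab : a ≤ b)
    (hg : IntervalIntegrable g volume a b) (hgc : ContinuousOn g (Ioo a b)) :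
    ∫ x in a..b, ∫ t in a..x, g t = ∫ x in a..b, (b - x) • g x := by
  have hG : ContinuousOn (fun x => ∫ t in a..x, g t) (Icc a b) := by
    simpa [uIcc_of_le hab] using
      intervalIntegral.continuousOn_primitive_interval' hg left_mem_uIcc
  have hderiv : ∀ x ∈ Ioo a b, HasDerivAt (fun x => (x - b) • ∫ t in a..x, g t)
      ((∫ t in a..x, g t) + (x - b) • g x) x := by
    intro x hx
    have hgx : HasDerivAt (fun x => ∫ t in a..x, g t) (g x) x :=
      intervalIntegral.integral_hasDerivAt_right
        (hg.mono_set (by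
          rw [uIcc_of_le hab, uIcc_of_le hx.1.le]; exact Icc_subset_Icc_right hx.2.le))
        ((hgc.stronglyMeasurableAtFilter isOpen_Ioo) x hx)
        (hgc.continuousAt (isOpen_Ioo.mem_nhds hx))
    refine (((hasDerivAt_id' x).sub_const b).smul hgx).congr_deriv ?_
    rw [one_smul, add_comm]
  have hint : IntervalIntegrable (fun x => (x - b) • g x) volume a b :=
    hg.continuousOn_smul (by fun_prop)
  have hFTC := intervalIntegral.integral_eq_sub_of_hasDerivAt_of_le
    (f := fun x => (x - b) • ∫ t in a..x, g t) hab
    ((continuousOn_id.sub continuousOn_const).smul hG) hderiv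
    ((hG.intervalIntegrable_of_Icc hab).add hint)
  rw [intervalIntegral.integral_add (hG.intervalIntegrable_of_Icc hab) hint] at hFTC
  simp only [sub_self, zero_smul, intervalIntegral.integral_same, smul_zero] at hFTC
  rw [eq_neg_of_add_eq_zero_left hFTC, ← intervalIntegral.integral_neg]
  simp only [← neg_smul, neg_sub]

noncomputable def planeWave (ξ x : ℝ) : ℂ := exp (-(I * x * ξ))

section PlaneWave

variable (ξ : ℝ)

theorem continuous_planeWave : Continuous (planeWave ξ) := by
  unfold planeWave; fun_prop

theorem norm_planeWave (x : ℝ) : ‖planeWave ξ x‖ = 1 := by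
  simp [planeWave, norm_exp]

theorem conj_planeWave (x : ℝ) : starRingEnd ℂ (planeWave ξ x) = exp (I * x * ξ) := by
  rw [planeWave, ← exp_conj]
  simp

theorem planeWave_mul_exp (x : ℝ) : planeWave ξ x * exp (I * x * ξ) = 1 := by
  rw [planeWave, ← exp_add, neg_add_cancel, exp_zero]

theorem hasDerivAt_planeWave (x : ℝ) :
    HasDerivAt (planeWave ξ) (-(I * ξ) * planeWave ξ x) x := by
  convert ((hasDerivAt_id' (x : ℂ)).const_mul (-(I * ξ))).cexp.comp_ofReal using 1
  · funext y
    rw [planeWave]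
    ring_nf
  · rw [planeWave]
    ring_nf

theorem memLp_planeWave (p : ENNReal) (μ : Measure ℝ) [IsFiniteMeasure μ] :
    MemLp (planeWave ξ) p μ :=
  (memLp_top_of_bound (continuous_planeWave ξ).aestronglyMeasurable 1
    (Eventually.of_forall fun x => (norm_planeWave ξ x).le)).mono_exponent le_top

end PlaneWave

noncomputable def planeWaveLp (μ : Measure ℝ) [IsFiniteMeasure μ] (ξ : ℝ) : Lp ℂ 2 μ :=
  (memLp_planeWave ξ 2 μ).toLp

section PlaneWaveLp

variable {μ : Measure ℝ} [IsFiniteMeasure μ]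

theorem coeFn_planeWaveLp (ξ : ℝ) : planeWaveLp μ ξ =ᵐ[μ] planeWave ξ :=
  (memLp_planeWave ξ 2 μ).coeFn_toLp

theorem norm_coeFn_planeWaveLp (ξ : ℝ) : ∀ᵐ x ∂μ, ‖planeWaveLp μ ξ x‖ = 1 :=
  (coeFn_planeWaveLp ξ).mono fun x hx => hx ▸ norm_planeWave ξ x

theorem isBounded_range_planeWaveLp : Bornology.IsBounded (range (planeWaveLp μ)) :=
  isBounded_iff_forall_norm_le.mpr ⟨_, forall_mem_range.mpr fun ξ => Lp.norm_le_of_ae_bound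
    zero_le_one ((norm_coeFn_planeWaveLp ξ).mono fun _ hx => hx.le)⟩

end PlaneWaveLp

theorem tendsto_dual_planeWaveLp {S : Set ℝ} (hS : MeasurableSet S)
    [IsFiniteMeasure (volume.restrict S)] (ℓ : StrongDual ℂ (Lp ℂ 2 (volume.restrict S))) :
    Tendsto (fun ξ => ℓ (planeWaveLp (volume.restrict S) ξ)) (cocompact ℝ) (𝓝 0) := by
  obtain ⟨g, rfl⟩ := (InnerProductSpace.toDual ℂ _).surjective ℓ
  refine ((tendsto_setIntegral_exp_mul_cocompact hS fun t => starRingEnd ℂ (g t)).comp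
    (tendsto_cocompact_mul_left₀ (neg_ne_zero.mpr one_ne_zero))).congr fun ξ => ?_
  rw [InnerProductSpace.toDual_apply_apply, L2.inner_def]
  refine integral_congr_ae ((coeFn_planeWaveLp ξ).mono fun x hx => ?_)
  simp only [RCLike.inner_apply', hx, planeWave]
  push_cast
  ring_nf

theorem L2.inner_eq_integral_add_inner_of_norm_eq_one {α : Type*} [MeasurableSpace α]
    {μ : Measure α} {f g h : Lp ℂ 2 μ} {φ : α → ℂ} (hφ : Integrable φ μ)
    (hf : ∀ᵐ x ∂μ, ‖f x‖ = 1) (hg : g =ᵐ[μ] fun x => φ x * f x + h x) :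
    inner ℂ f g = ∫ x, φ x ∂μ + inner ℂ f h := by
  rw [L2.inner_def, L2.inner_def, ← integral_add hφ (L2.integrable_inner f h)]
  refine integral_congr_ae ((hf.and hg).mono fun x ⟨hfx, hgx⟩ => ?_)
  dsimp only at hgx ⊢
  rw [RCLike.inner_apply', RCLike.inner_apply', hgx, mul_add, ← mul_assoc, mul_comm _ (φ x),
    mul_assoc, conj_mul', hfx]
  simp

theorem setIntegral_Ioo_conv_planeWave (s : ℝ → ℂ) (ξ : ℝ) {u : ℝ} (hu : 0 ≤ u) :
    ∫ t in Ioo 0 u, s (u - t) * planeWave ξ t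
      = planeWave ξ u * ∫ t in 0..u, exp (I * t * ξ) * s t := by
  have hshift : ∀ t : ℝ, s (u - t) * planeWave ξ t
      = planeWave ξ u * (exp (I * ↑(u - t) * ξ) * s (u - t)) := fun t => by
    simp only [planeWave]
    rw [mul_left_comm, ← mul_assoc (exp _), ← exp_add]
    push_cast
    ring_nf
  rw [← integral_Ioc_eq_integral_Ioo, ← intervalIntegral.integral_of_le hu,
    intervalIntegral.integral_congr fun t _ => hshift t, intervalIntegral.integral_const_mul,
    intervalIntegral.integral_comp_sub_left (fun v => exp (I * v * ξ) * s v), sub_self, sub_zero]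

section Convolution

variable {ω : ℝ} {s : ℝ → ℂ}

theorem intervalIntegrable_exp_mul (hs : IntervalIntegrable s volume 0 ω) (ξ : ℝ) {x : ℝ}
    (hx : x ∈ Icc 0 ω) : IntervalIntegrable (fun t => exp (I * t * ξ) * s t) volume 0 x :=
  (hs.mono_set (by rw [uIcc_of_le hx.1, uIcc_of_le (hx.1.trans hx.2)]; exact
    Icc_subset_Icc_right hx.2)).continuousOn_mul (by fun_prop)

theorem hasDerivAt_setIntegral_Ioo_conv (hs : IntervalIntegrable s volume 0 ω)
    (hsc : ContinuousOn s (Ioo 0 ω)) {ξ : ℝ} {f : ℝ → ℂ}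
    (hf : f =ᵐ[volume.restrict (Ioo 0 ω)] planeWave ξ) {x : ℝ} (hx : x ∈ Ioo 0 ω) :
    HasDerivAt (fun u => ∫ t in Ioo 0 u, s (u - t) * f t)
      (-(I * ξ) * planeWave ξ x * (∫ t in 0..x, exp (I * t * ξ) * s t) + s x) x := by
  have hprimitive : HasDerivAt (fun u => ∫ t in 0..u, exp (I * t * ξ) * s t)
      (exp (I * x * ξ) * s x) x :=
    intervalIntegral.integral_hasDerivAt_right
      (intervalIntegrable_exp_mul hs ξ (Ioo_subset_Icc_self hx))
      (((by fun_prop : Continuous fun t : ℝ => exp (I * t * ξ)).continuousOn.mul hsc)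
        |>.stronglyMeasurableAtFilter isOpen_Ioo x hx)
      ((by fun_prop : Continuous fun t : ℝ => exp (I * t * ξ)).continuousAt.mul
        (hsc.continuousAt (isOpen_Ioo.mem_nhds hx)))
  have hconv : (fun u => ∫ t in Ioo 0 u, s (u - t) * f t)
      =ᶠ[𝓝 x] fun u => planeWave ξ u * ∫ t in 0..u, exp (I * t * ξ) * s t := by
    filter_upwards [isOpen_Ioo.mem_nhds hx] with u hu
    rw [← setIntegral_Ioo_conv_planeWave s ξ hu.1.le]
    refine integral_congr_ae ?_
    filter_upwards [ae_restrict_of_ae_restrict_of_subset (Ioo_subset_Ioo_right hu.2.le) hf]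
      with t ht using by rw [ht]
  refine (((hasDerivAt_planeWave ξ x).mul hprimitive).congr_of_eventuallyEq hconv).congr_deriv ?_
  rw [← mul_assoc, planeWave_mul_exp, one_mul]

theorem inner_planeWaveLp_eq_of_hasDerivAt_conv (hω : 0 < ω)
    (hs : IntervalIntegrable s volume 0 ω) (hsc : ContinuousOn s (Ioo 0 ω)) (ξ : ℝ)
    {g : Lp ℂ 2 (volume.restrict (Ioo 0 ω))}
    (hg : ∀ᵐ x ∂(volume.restrict (Ioo 0 ω)), HasDerivAt
      (fun u => ∫ t in Ioo 0 u, s (u - t) * planeWaveLp (volume.restrict (Ioo 0 ω)) ξ t) (g x) x) :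
    inner ℂ (planeWaveLp (volume.restrict (Ioo 0 ω)) ξ) g
      = ω * ((-I * ξ) * ∫ t in Ioo 0 ω, exp (I * t * ξ) * s t * (1 - t / ω))
        + ∫ t in Ioo 0 ω, exp (I * t * ξ) * s t := by
  set G := fun x => ∫ t in 0..x, exp (I * t * ξ) * s t
  have hexp : IntervalIntegrable (fun t => exp (I * t * ξ) * s t) volume 0 ω :=
    intervalIntegrable_exp_mul hs ξ (right_mem_Icc.mpr hω.le)
  have hG : ContinuousOn G (Icc 0 ω) := by
    simpa [uIcc_of_le hω.le] using
      intervalIntegral.continuousOn_primitive_interval' hexp left_mem_uIcc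
  have hpointwise : ∀ᵐ x ∂(volume.restrict (Ioo 0 ω)),
      inner ℂ (planeWaveLp (volume.restrict (Ioo 0 ω)) ξ x) (g x)
        = -(I * ξ) * G x + exp (I * x * ξ) * s x := by
    filter_upwards [hg, coeFn_planeWaveLp ξ, ae_restrict_mem measurableSet_Ioo]
      with x hgx hpx hx
    rw [hgx.unique (hasDerivAt_setIntegral_Ioo_conv hs hsc (coeFn_planeWaveLp ξ) hx),
      RCLike.inner_apply', hpx, conj_planeWave]
    linear_combination (-(I * ξ) * G x) * planeWave_mul_exp ξ x
  have hIoo : ∀ F : ℝ → ℂ, ∫ x in Ioo 0 ω, F x = ∫ x in 0..ω, F x := fun F => by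
    rw [intervalIntegral.integral_of_le hω.le, integral_Ioc_eq_integral_Ioo]
  rw [L2.inner_def, integral_congr_ae hpointwise,
    integral_add ((hG.integrableOn_Icc.mono_set Ioo_subset_Icc_self).const_mul _)
      ((intervalIntegrable_iff_integrableOn_Ioo_of_le hω.le).mp hexp),
    integral_const_mul, hIoo G, integral_primitive_eq_integral_sub_smul hω.le hexp
      ((by fun_prop : Continuous fun t : ℝ => exp (I * t * ξ)).continuousOn.mul hsc),
    ← hIoo, mul_left_comm, ← integral_const_mul (ω : ℂ)]
  congr 2
  · ring
  · refine integral_congr_ae (Eventually.of_forall fun t => ?_)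
    have : (ω : ℂ) ≠ 0 := ofReal_ne_zero.mpr hω.ne'
    simp only [real_smul, ofReal_sub]
    field_simp

end Convolution

theorem stmt_17_general (ω : ℝ) (hω : 0 < ω) (s : ℝ → ℂ)
    (hsL2 : MemLp s 2 (volume.restrict (Ioo 0 ω)))
    (hsdiff : ∀ x ∈ Ioo (0 : ℝ) ω, DifferentiableAt ℝ s x)
    (T : Lp ℂ 2 (volume.restrict (Ioo 0 ω)) →L[ℂ] Lp ℂ 2 (volume.restrict (Ioo 0 ω)))
    (hT : ∀ f : Lp ℂ 2 (volume.restrict (Ioo 0 ω)),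
      ∀ᵐ x ∂(volume.restrict (Ioo 0 ω)),
        HasDerivAt (fun u : ℝ => ∫ t in Ioo (0 : ℝ) u, s (u - t) * f t) (T f x) x)
    (β₁ β₂ : ℂ) (hβne : β₁ ≠ β₂)
    (hβ : ∀ β ∈ ({β₁, β₂} : Set ℂ), ∃ ξ : ℕ → ℝ,
      (Tendsto ξ atTop atTop ∨ Tendsto ξ atTop atBot) ∧
      Tendsto
        (fun k : ℕ => (-Complex.I * ξ k) *
          ∫ t in Ioo (0 : ℝ) ω, Complex.exp (Complex.I * t * (ξ k)) * s t * (1 - t / ω))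
        atTop (nhds β)) :
    ¬ ∃ (φ : ℝ → ℂ) (V : Lp ℂ 2 (volume.restrict (Ioo 0 ω)) →L[ℂ]
        Lp ℂ 2 (volume.restrict (Ioo 0 ω))),
      MemLp φ ⊤ (volume.restrict (Ioo 0 ω)) ∧ IsCompactOperator (⇑V) ∧
      ∀ f : Lp ℂ 2 (volume.restrict (Ioo 0 ω)),
        (⇑(T f) : ℝ → ℂ) =ᵐ[volume.restrict (Ioo 0 ω)]
          fun x : ℝ => φ x * f x + V f x := by
  rintro ⟨φ, V, hφ, hV, hdec⟩
  have hs : IntervalIntegrable s volume 0 ω :=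
    (intervalIntegrable_iff_integrableOn_Ioo_of_le hω.le).mpr (hsL2.integrable one_le_two)
  have hsc : ContinuousOn s (Ioo 0 ω) := fun x hx =>
    (hsdiff x hx).continuousAt.continuousWithinAt
  set e := planeWaveLp (volume.restrict (Ioo 0 ω))
  have key : ∀ β ∈ ({β₁, β₂} : Set ℂ), ∫ x in Ioo 0 ω, φ x = ω * β := by
    intro β hβmem
    obtain ⟨ξ, hξ, hσ⟩ := hβ β hβmem
    replace hξ := tendsto_cocompact_of_tendsto_atTop_or_atBot hξ
    have hT_lim : Tendsto (fun k => inner ℂ (e (ξ k)) (T (e (ξ k)))) atTop (𝓝 (ω * β)) := by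
      have := ((hσ.const_mul (ω : ℂ)).add
        ((tendsto_setIntegral_exp_mul_cocompact measurableSet_Ioo s).comp hξ)).congr fun k =>
          (inner_planeWaveLp_eq_of_hasDerivAt_conv hω hs hsc (ξ k) (hT _)).symm
      rwa [add_zero] at this
    have hdec_lim : Tendsto (fun k => inner ℂ (e (ξ k)) (T (e (ξ k)))) atTop
        (𝓝 (∫ x in Ioo 0 ω, φ x)) := by
      have := (tendsto_const_nhds.add (hV.tendsto_inner_apply_zero
        (isBounded_range_planeWaveLp.subset (range_comp_subset_range ξ e))
        fun ℓ => (tendsto_dual_planeWaveLp measurableSet_Ioo ℓ).comp hξ)).congr fun k =>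
          (L2.inner_eq_integral_add_inner_of_norm_eq_one (hφ.integrable le_top)
            (norm_coeFn_planeWaveLp _) (hdec (e (ξ k)))).symm
      rwa [add_zero] at this
    exact tendsto_nhds_unique hdec_lim hT_lim
  exact hβne (mul_left_cancel₀ (ofReal_ne_zero.mpr hω.ne')
    ((key β₁ (by simp)).symm.trans (key β₂ (by simp))))

theorem stmt_17 (ω : ℝ) (hω : 0 < ω) (s : ℝ → ℂ)
    (hsL2 : MemLp s 2 (volume.restrict (Ioo 0 ω)))
    (hsdiff : ∀ x ∈ Ioo (0 : ℝ) ω, DifferentiableAt ℝ s x)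
    (hsder : IntegrableOn (fun x : ℝ => Real.sqrt x • deriv s x) (Ioo 0 ω) volume)
    (T : Lp ℂ 2 (volume.restrict (Ioo 0 ω)) →L[ℂ] Lp ℂ 2 (volume.restrict (Ioo 0 ω)))
    (hT : ∀ f : Lp ℂ 2 (volume.restrict (Ioo 0 ω)),
      ∀ᵐ x ∂(volume.restrict (Ioo 0 ω)),
        HasDerivAt (fun u : ℝ => ∫ t in Ioo (0 : ℝ) u, s (u - t) * f t) (T f x) x)
    (β₁ β₂ : ℂ) (hβne : β₁ ≠ β₂)
    (hβ : ∀ β ∈ ({β₁, β₂} : Set ℂ), ∃ ξ : ℕ → ℝ,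
      (Tendsto ξ atTop atTop ∨ Tendsto ξ atTop atBot) ∧
      Tendsto
        (fun k : ℕ => (-Complex.I * ξ k) *
          ∫ t in Ioo (0 : ℝ) ω, Complex.exp (Complex.I * t * (ξ k)) * s t * (1 - t / ω))
        atTop (nhds β)) :
    ¬ ∃ (φ : ℝ → ℂ) (V : Lp ℂ 2 (volume.restrict (Ioo 0 ω)) →L[ℂ]
        Lp ℂ 2 (volume.restrict (Ioo 0 ω))),
      MemLp φ ⊤ (volume.restrict (Ioo 0 ω)) ∧ IsCompactOperator (⇑V) ∧
      ∀ f : Lp ℂ 2 (volume.restrict (Ioo 0 ω)),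
        (⇑(T f) : ℝ → ℂ) =ᵐ[volume.restrict (Ioo 0 ω)]
          fun x : ℝ => φ x * f x + V f x :=
  stmt_17_general ω hω s hsL2 hsdiff T hT β₁ β₂ hβne hβ
end
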